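/- arXiv:1901.02156 — 2 statements merged into one kernel-verified Lean document; each statement's English description precedes it below -/
import Mathlib

section
/- Summed credit over all targets: in a finite DAG with nonnegative edge weights, removing edge e = (u,v) decreases Σ_{w ∈ V} Γ_{x,w} by exactly (Γ_{x,u} · γ_{(u,v)}) · Σ_{w ∈ V} Γ_{v,w}, where all quantities on the right are computed in the original graph. -/
/-- `IsPath E s w p` : `p` is a list of consecutive directed edges of `E` from `s` to `w`. -/
def IsPath {V : Type*} (E : Finset (V × V)) : V → V → List (V × V) → Prop
  | s, w, [] => s = w
  | s, w, e :: p => e ∈ E ∧ e.1 = s ∧ IsPath E e.2 w p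

/-- The weight of a path: product of edge weights along it. -/
def pathWeight {V : Type*} (γ : V × V → ℝ) (p : List (V × V)) : ℝ :=
  (p.map γ).prod

/-!
Every path through `(u, v)` splits uniquely as a path `x → u`, the edge, and a path `v → w`;
uniqueness holds because in a DAG a path never uses the same edge twice. Summing the weights
of these splittings factorises, and the paths avoiding `(u, v)` are exactly what remains after
the deletion.
-/

section Paths

variable {V : Type*} {E : Finset (V × V)}

lemma pathWeight_append_cons (γ : V × V → ℝ) (q r : List (V × V)) (c : V × V) :
    pathWeight γ (q ++ c :: r) = pathWeight γ q * γ c * pathWeight γ r := by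
  simp [pathWeight, mul_assoc]

lemma isPath_append {s w : V} {q r : List (V × V)} :
    IsPath E s w (q ++ r) ↔ ∃ m, IsPath E s m q ∧ IsPath E m w r := by
  induction q generalizing s with
  | nil => exact ⟨fun h => ⟨s, rfl, h⟩, fun ⟨_, hm, h⟩ => hm ▸ h⟩
  | cons e q ih =>
    simp only [List.cons_append, IsPath, ih]
    exact ⟨fun ⟨he, h1, m, hq, hr⟩ => ⟨m, ⟨he, h1, hq⟩, hr⟩,
      fun ⟨m, ⟨he, h1, hq⟩, hr⟩ => ⟨he, h1, m, hq, hr⟩⟩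

lemma isPath_append_cons {s w a b : V} {q r : List (V × V)} :
    IsPath E s w (q ++ (a, b) :: r) ↔ IsPath E s a q ∧ (a, b) ∈ E ∧ IsPath E b w r := by
  simp only [isPath_append, IsPath]
  exact ⟨fun ⟨m, hq, he, hm, hr⟩ => ⟨hm ▸ hq, he, hr⟩,
    fun ⟨hq, he, hr⟩ => ⟨a, hq, he, rfl, hr⟩⟩

variable {topo : V → ℕ} (hdag : ∀ e ∈ E, topo e.1 < topo e.2)
include hdag

lemma IsPath.topo_le {s w : V} {p : List (V × V)} (h : IsPath E s w p) : topo s ≤ topo w := by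
  induction p generalizing s with
  | nil => exact (show s = w from h) ▸ le_rfl
  | cons e p ih =>
    obtain ⟨he, rfl, hp⟩ := h
    exact (hdag e he).le.trans (ih hp)

lemma IsPath.topo_le_of_mem {s w : V} {p : List (V × V)} {e : V × V} (h : IsPath E s w p)
    (he : e ∈ p) : topo s ≤ topo e.1 ∧ topo e.2 ≤ topo w := by
  induction p generalizing s with
  | nil => cases he
  | cons a p ih =>
    obtain ⟨ha, rfl, hp⟩ := h
    rcases List.mem_cons.1 he with rfl | he
    · exact ⟨le_rfl, hp.topo_le hdag⟩
    · obtain ⟨h1, h2⟩ := ih hp he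
      exact ⟨(hdag a ha).le.trans h1, h2⟩

lemma IsPath.edge_notMem_of_target {s a b : V} {p : List (V × V)} (h : IsPath E s a p)
    (hab : (a, b) ∈ E) : (a, b) ∉ p := fun hmem =>
  (hdag _ hab).not_ge (h.topo_le_of_mem hdag hmem).2

lemma IsPath.edge_notMem_of_source {a b w : V} {p : List (V × V)} (h : IsPath E b w p)
    (hab : (a, b) ∈ E) : (a, b) ∉ p := fun hmem =>
  (hdag _ hab).not_ge (h.topo_le_of_mem hdag hmem).1

lemma sum_pathWeight_filter_mem_edge [DecidableEq V] (γ : V × V → ℝ) {s u v w : V}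
    (huv : (u, v) ∈ E) {P Q R : Finset (List (V × V))}
    (hP : ∀ p, p ∈ P ↔ IsPath E s w p) (hQ : ∀ q, q ∈ Q ↔ IsPath E s u q)
    (hR : ∀ r, r ∈ R ↔ IsPath E v w r) :
    ∑ p ∈ P.filter ((u, v) ∈ ·), pathWeight γ p =
      (∑ q ∈ Q, pathWeight γ q) * γ (u, v) * ∑ r ∈ R, pathWeight γ r := by
  rw [Finset.sum_mul, Finset.sum_mul_sum, ← Finset.sum_product']
  symm
  apply Finset.sum_nbij (fun qr => qr.1 ++ (u, v) :: qr.2)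
  · rintro ⟨q, r⟩ hqr
    rw [Finset.mem_product, hQ, hR] at hqr
    exact Finset.mem_filter.2
      ⟨(hP _).2 (isPath_append_cons.2 ⟨hqr.1, huv, hqr.2⟩), by simp⟩
  · rintro ⟨q₁, r₁⟩ h₁ ⟨q₂, r₂⟩ - heq
    rw [Finset.mem_coe, Finset.mem_product, hQ, hR] at h₁
    obtain ⟨hq, -, hr⟩ := (List.append_cons_inj_of_notMem
      (h₁.1.edge_notMem_of_target hdag huv) (h₁.2.edge_notMem_of_source hdag huv)).1 heq
    exact Prod.ext hq hr
  · intro p hp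
    obtain ⟨hpP, hmem⟩ := Finset.mem_filter.1 hp
    obtain ⟨q, r, rfl⟩ := List.mem_iff_append.1 hmem
    obtain ⟨hq, -, hr⟩ := isPath_append_cons.1 ((hP _).1 hpP)
    exact ⟨(q, r), Finset.mem_product.2 ⟨(hQ q).2 hq, (hR r).2 hr⟩, rfl⟩
  · rintro ⟨q, r⟩ -
    exact (pathWeight_append_cons γ q r (u, v)).symm

end Paths

theorem summed_edge_deletion_credit_general {V : Type*} [Fintype V] [DecidableEq V]
    (E : Finset (V × V)) (γ : V × V → ℝ)
    (topo : V → ℕ) (hdag : ∀ e ∈ E, topo e.1 < topo e.2)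
    (x u v : V) (huv : (u, v) ∈ E)
    (Px Pv : V → Finset (List (V × V))) (Pxu : Finset (List (V × V)))
    (hPx : ∀ w p, p ∈ Px w ↔ IsPath E x w p)
    (hPv : ∀ w p, p ∈ Pv w ↔ IsPath E v w p)
    (hPxu : ∀ p, p ∈ Pxu ↔ IsPath E x u p) :
    (∑ w : V, ∑ p ∈ Px w, pathWeight γ p) -
      (∑ w : V, ∑ p ∈ (Px w).filter (fun p => (u, v) ∉ p), pathWeight γ p) =
    ((∑ p ∈ Pxu, pathWeight γ p) * γ (u, v)) *
      (∑ w : V, ∑ p ∈ Pv w, pathWeight γ p) := by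
  have deleted_eq_through (w : V) :
      (∑ p ∈ Px w, pathWeight γ p) - ∑ p ∈ (Px w).filter ((u, v) ∉ ·), pathWeight γ p =
        ∑ p ∈ (Px w).filter ((u, v) ∈ ·), pathWeight γ p := by
    rw [← Finset.sum_filter_add_sum_filter_not (Px w) ((u, v) ∈ ·), add_sub_cancel_right]
  rw [← Finset.sum_sub_distrib, Finset.mul_sum]
  refine Finset.sum_congr rfl fun w _ => ?_
  rw [deleted_eq_through,
    sum_pathWeight_filter_mem_edge hdag γ huv (hPx w) hPxu (hPv w)]

/-- Summed credit over all targets: in a finite DAG with nonnegative edge weights, removing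
the edge `(u,v)` decreases `∑_{w ∈ V} Γ_{x,w}` by exactly
`(Γ_{x,u} * γ (u,v)) * ∑_{w ∈ V} Γ_{v,w}`, all computed in the original graph. -/
theorem summed_edge_deletion_credit {V : Type*} [Fintype V] [DecidableEq V]
    (E : Finset (V × V)) (γ : V × V → ℝ) (hγ : ∀ e, 0 ≤ γ e)
    (topo : V → ℕ) (hdag : ∀ e ∈ E, topo e.1 < topo e.2)
    (x u v : V) (huv : (u, v) ∈ E)
    (Px Pv : V → Finset (List (V × V))) (Pxu : Finset (List (V × V)))
    (hPx : ∀ w p, p ∈ Px w ↔ IsPath E x w p)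
    (hPv : ∀ w p, p ∈ Pv w ↔ IsPath E v w p)
    (hPxu : ∀ p, p ∈ Pxu ↔ IsPath E x u p) :
    (∑ w : V, ∑ p ∈ Px w, pathWeight γ p) -
      (∑ w : V, ∑ p ∈ (Px w).filter (fun p => (u, v) ∉ p), pathWeight γ p) =
    ((∑ p ∈ Pxu, pathWeight γ p) * γ (u, v)) *
      (∑ w : V, ∑ p ∈ Pv w, pathWeight γ p) :=
  summed_edge_deletion_credit_general E γ topo hdag x u v huv Px Pv Pxu hPx hPv hPxu
end

section
/- Greedy (1 − 1/e)-approximation for cardinality-constrained monotone submodular maximization: let Δ : 2^C → ℝ≥0 be monotone submodular with Δ(∅) = 0, and let the greedy algorithm build B_k by iteratively adding the element with maximum marginal gain. Then Δ(B_k) ≥ (1 − (1 − 1/k)^k) · max{Δ(B) : |B| ≤ k} ≥ (1 − 1/e) · max{Δ(B) : |B| ≤ k}. -/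
/-!
Let `g t = Δ Bopt - Δ (B t)` be the gap after `t` greedy steps. By monotonicity and
submodularity, `g t` is at most the sum of the marginal gains of the at most `k` elements of
`Bopt` over `B t`, each of which the greedy gain `g t - g (t + 1)` dominates. Hence
`g (t + 1) ≤ (1 - 1/k) g t`, so `g k ≤ (1 - 1/k)^k g 0 ≤ e⁻¹ Δ Bopt`.
-/

namespace Finset

variable {α : Type*} [DecidableEq α] {Δ : Finset α → ℝ}

theorem sub_le_sum_marginal_of_submodular
    (hsub : ∀ S T : Finset α, ∀ e : α, S ⊆ T → e ∉ T →
      Δ (insert e T) - Δ T ≤ Δ (insert e S) - Δ S)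
    (S T : Finset α) :
    Δ (S ∪ T) - Δ T ≤ ∑ e ∈ S \ T, (Δ (insert e T) - Δ T) := by
  induction S using Finset.induction with
  | empty => simp
  | @insert a S ha ih =>
    by_cases haT : a ∈ T
    · rwa [insert_union, insert_eq_of_mem (mem_union_right S haT), insert_sdiff_of_mem S haT]
    · have haST : a ∉ S ∪ T := by simp [ha, haT]
      rw [insert_union, insert_sdiff_of_notMem S haT, sum_insert (by simp [ha])]
      linarith [hsub T (S ∪ T) a subset_union_right haST]

theorem sub_le_mul_greedy_gain
    (hmono : ∀ S T : Finset α, S ⊆ T → Δ S ≤ Δ T)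
    (hsub : ∀ S T : Finset α, ∀ e : α, S ⊆ T → e ∉ T →
      Δ (insert e T) - Δ T ≤ Δ (insert e S) - Δ S)
    {T : Finset α} {e : α} (hmax : ∀ e', Δ (insert e' T) ≤ Δ (insert e T))
    {S : Finset α} {k : ℕ} (hS : #S ≤ k) :
    Δ S - Δ T ≤ k * (Δ (insert e T) - Δ T) := by
  have hcard : (#(S \ T) : ℝ) ≤ k := by exact_mod_cast (card_le_card sdiff_subset).trans hS
  calc Δ S - Δ T ≤ Δ (S ∪ T) - Δ T := by linarith [hmono S (S ∪ T) subset_union_left]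
    _ ≤ ∑ x ∈ S \ T, (Δ (insert x T) - Δ T) := sub_le_sum_marginal_of_submodular hsub S T
    _ ≤ ∑ _x ∈ S \ T, (Δ (insert e T) - Δ T) := sum_le_sum fun x _ ↦ by linarith [hmax x]
    _ = #(S \ T) * (Δ (insert e T) - Δ T) := by rw [sum_const, nsmul_eq_mul]
    _ ≤ k * (Δ (insert e T) - Δ T) :=
      mul_le_mul_of_nonneg_right hcard (sub_nonneg.2 (hmono _ _ (subset_insert e T)))

end Finset

theorem greedy_submodular_approximation_general {α : Type*} [DecidableEq α]
    (Δ : Finset α → ℝ)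
    (h0 : Δ ∅ = 0)
    (hmono : ∀ S T : Finset α, S ⊆ T → Δ S ≤ Δ T)
    (hsub : ∀ S T : Finset α, ∀ e : α, S ⊆ T → e ∉ T →
      Δ (insert e T) - Δ T ≤ Δ (insert e S) - Δ S)
    (k : ℕ) (hk : 0 < k)
    (B : ℕ → Finset α) (hB0 : B 0 = ∅)
    (hgreedy : ∀ t, ∃ e, e ∉ B t ∧ B (t + 1) = insert e (B t) ∧
      ∀ e', Δ (insert e' (B t)) ≤ Δ (insert e (B t)))
    (Bopt : Finset α) (hBopt : Bopt.card ≤ k) :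
    (1 - (1 - 1 / (k : ℝ)) ^ k) * Δ Bopt ≤ Δ (B k) ∧
    (1 - 1 / Real.exp 1) * Δ Bopt ≤ Δ (B k) := by
  have hk_one : (1 : ℝ) ≤ k := by exact_mod_cast hk
  have hgap_contract :
      ∀ t, Δ Bopt - Δ (B (t + 1)) ≤ (1 - 1 / (k : ℝ)) * (Δ Bopt - Δ (B t)) := by
    intro t
    obtain ⟨e, -, hBe, hmax⟩ := hgreedy t
    have hstep := Finset.sub_le_mul_greedy_gain hmono hsub hmax hBopt
    have hgain := (div_le_iff₀' (by positivity)).2 hstep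
    rw [hBe, sub_mul, one_mul, one_div_mul_eq_div]
    linarith
  have hgeom := le_geom (u := fun t ↦ Δ Bopt - Δ (B t))
    (sub_nonneg.2 (div_le_one_of_le₀ hk_one k.cast_nonneg)) k fun t _ ↦ hgap_contract t
  simp only [hB0, h0, sub_zero] at hgeom
  have hratio : (1 - (1 - 1 / (k : ℝ)) ^ k) * Δ Bopt ≤ Δ (B k) := by linarith
  refine ⟨hratio, hratio.trans' (mul_le_mul_of_nonneg_right ?_ ?_)⟩
  · have hpow := Real.one_sub_div_pow_le_exp_neg (t := 1) hk_one
    rw [Real.exp_neg, ← one_div] at hpow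
    linarith
  · simpa [h0] using hmono ∅ Bopt (Finset.empty_subset _)

/-- Greedy `(1 − 1/e)`-approximation for cardinality-constrained monotone submodular
maximization: if `Δ` is nonnegative, normalized, monotone and submodular, and `B t` is the
greedy sequence (each step adding an element of maximum marginal gain), then for every
feasible set `Bopt` with `|Bopt| ≤ k`,
`Δ (B k) ≥ (1 − (1 − 1/k)^k) Δ Bopt ≥ (1 − 1/e) Δ Bopt`. -/
theorem greedy_submodular_approximation {α : Type*} [DecidableEq α]
    (Δ : Finset α → ℝ)
    (hnn : ∀ B, 0 ≤ Δ B) (h0 : Δ ∅ = 0)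
    (hmono : ∀ S T : Finset α, S ⊆ T → Δ S ≤ Δ T)
    (hsub : ∀ S T : Finset α, ∀ e : α, S ⊆ T → e ∉ T →
      Δ (insert e T) - Δ T ≤ Δ (insert e S) - Δ S)
    (k : ℕ) (hk : 0 < k)
    (B : ℕ → Finset α) (hB0 : B 0 = ∅)
    (hgreedy : ∀ t, ∃ e, e ∉ B t ∧ B (t + 1) = insert e (B t) ∧
      ∀ e', Δ (insert e' (B t)) ≤ Δ (insert e (B t)))
    (Bopt : Finset α) (hBopt : Bopt.card ≤ k) :
    (1 - (1 - 1 / (k : ℝ)) ^ k) * Δ Bopt ≤ Δ (B k) ∧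
    (1 - 1 / Real.exp 1) * Δ Bopt ≤ Δ (B k) :=
  greedy_submodular_approximation_general Δ h0 hmono hsub k hk B hB0 hgreedy Bopt hBopt
end
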